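/- arXiv:2306.17609 — 4 statements merged into one kernel-verified Lean document; each statement's English description precedes it below -/
import Mathlib

section
/- Let G = (V, E) be a finite graph with n = |V| vertices, and suppose there exist nonnegative reals f_{e,u}, f_{e,v} for each edge e = (u,v) ∈ E such that f_{e,u} + f_{e,v} = 1 for every edge e, and for every vertex v, the sum of f_{e,v} over all edges e incident to v is at most 1 - 1/n. Then G is acyclic. -/
/-- If there is an assignment of nonnegative flows `f e v` to the
endpoints of each edge of a finite simple graph `G` on `n` vertices such that the
two flows of every edge sum to `1` and the total flow assigned to every vertex from
its incident edges is at most `1 - 1/n`, then `G` is acyclic. -/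
theorem stmt_2 {V : Type} [Fintype V] [DecidableEq V] (G : SimpleGraph V)
    [DecidableRel G.Adj]
    (f : Sym2 V → V → ℝ)
    (hnonneg : ∀ e ∈ G.edgeSet, ∀ v ∈ e, 0 ≤ f e v)
    (hedge : ∀ u v : V, G.Adj u v → f s(u, v) u + f s(u, v) v = 1)
    (hvertex : ∀ v : V, ∑ e ∈ G.incidenceFinset v, f e v ≤ 1 - 1 / (Fintype.card V)) :
    G.IsAcyclic := by
  intro a c hc
  cases c with
  | nil => exact hc.ne_nil rfl
  | cons hadj q =>
    set c : G.Walk a a := SimpleGraph.Walk.cons hadj q with hcdef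
    -- the vertex set of the cycle
    set S : Finset V := q.support.toFinset with hS
    -- the edge set of the cycle
    set Ec : Finset (Sym2 V) := c.edges.toFinset with hEc
    have hsupp : ∀ x ∈ c.support, x ∈ S := by
      intro x hx
      rw [hcdef, SimpleGraph.Walk.support_cons, List.mem_cons] at hx
      rcases hx with h | h
      · subst h; exact List.mem_toFinset.mpr q.end_mem_support
      · exact List.mem_toFinset.mpr h
    have hScard : S.card ≤ Ec.card := by
      have h1 : Ec.card = c.length := by
        rw [hEc, List.toFinset_card_of_nodup hc.edges_nodup,
          SimpleGraph.Walk.length_edges]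
      have h2 : S.card ≤ q.support.length := List.toFinset_card_le _
      rw [h1, hcdef, SimpleGraph.Walk.length_cons, ← SimpleGraph.Walk.length_support]
      exact h2
    have hedgemem : ∀ e ∈ Ec, e ∈ G.edgeSet := by
      intro e he
      exact c.edges_subset_edgeSet (List.mem_toFinset.mp he)
    -- key counting
    have key : (Ec.card : ℝ) ≤ ∑ v ∈ S, ∑ e ∈ G.incidenceFinset v, f e v := by
      have step1 : (Ec.card : ℝ) = ∑ e ∈ Ec, ∑ v ∈ S with v ∈ e, f e v := by
        rw [Finset.card_eq_sum_ones, Nat.cast_sum]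
        refine Finset.sum_congr rfl ?_
        intro e he
        induction e using Sym2.ind with
        | _ u v =>
          have hadj' : G.Adj u v := hedgemem _ he
          have hmemu : u ∈ S := hsupp u (c.fst_mem_support_of_mem_edges (List.mem_toFinset.mp he))
          have hmemv : v ∈ S := hsupp v (c.snd_mem_support_of_mem_edges (List.mem_toFinset.mp he))
          have hfil : (S.filter (fun x => x ∈ s(u, v))) = {u, v} := by
            ext x
            simp only [Finset.mem_filter, Sym2.mem_iff, Finset.mem_insert,
              Finset.mem_singleton]
            constructor
            · rintro ⟨_, h | h⟩ <;> [left; right] <;> exact h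
            · rintro (h | h) <;> subst h
              · exact ⟨hmemu, Or.inl rfl⟩
              · exact ⟨hmemv, Or.inr rfl⟩
          rw [hfil, Finset.sum_pair hadj'.ne, hedge u v hadj']
          norm_num
      rw [step1]
      have step2 : ∑ e ∈ Ec, ∑ v ∈ S with v ∈ e, f e v
          = ∑ v ∈ S, ∑ e ∈ Ec with v ∈ e, f e v := by
        simp_rw [Finset.sum_filter]
        exact Finset.sum_comm
      rw [step2]
      refine Finset.sum_le_sum ?_
      intro v hv
      refine Finset.sum_le_sum_of_subset_of_nonneg ?_ ?_
      · intro e he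
        rw [Finset.mem_filter] at he
        rw [SimpleGraph.mem_incidenceFinset]
        exact ⟨hedgemem _ he.1, he.2⟩
      · intro e he _
        rw [SimpleGraph.mem_incidenceFinset] at he
        exact hnonneg e he.1 v he.2
    -- upper bound
    have upper : ∑ v ∈ S, ∑ e ∈ G.incidenceFinset v, f e v
        ≤ (S.card : ℝ) * (1 - 1 / (Fintype.card V)) := by
      calc ∑ v ∈ S, ∑ e ∈ G.incidenceFinset v, f e v
          ≤ ∑ _v ∈ S, (1 - 1 / (Fintype.card V : ℝ)) :=
            Finset.sum_le_sum fun v _ => hvertex v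
        _ = (S.card : ℝ) * (1 - 1 / (Fintype.card V)) := by
            rw [Finset.sum_const, nsmul_eq_mul]
    have hn : (1 : ℝ) ≤ (Fintype.card V : ℝ) := by
      have : 0 < Fintype.card V := Fintype.card_pos_iff.mpr ⟨a⟩
      exact_mod_cast this
    have hk : 0 < Ec.card := by
      rw [hEc, Finset.card_pos]
      obtain ⟨e, he⟩ := List.exists_mem_of_ne_nil c.edges (by
        simp [hcdef])
      exact ⟨e, List.mem_toFinset.mpr he⟩
    have hfrac : 0 < 1 / (Fintype.card V : ℝ) := by positivity
    have hle : (Ec.card : ℝ) ≤ (Ec.card : ℝ) * (1 - 1 / (Fintype.card V)) := by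
      calc (Ec.card : ℝ) ≤ ∑ v ∈ S, ∑ e ∈ G.incidenceFinset v, f e v := key
        _ ≤ (S.card : ℝ) * (1 - 1 / (Fintype.card V)) := upper
        _ ≤ (Ec.card : ℝ) * (1 - 1 / (Fintype.card V)) := by
            have h1 : (0:ℝ) ≤ 1 - 1 / (Fintype.card V) := by
              have : 1 / (Fintype.card V : ℝ) ≤ 1 := by
                rw [div_le_one (by linarith)]; exact hn
              linarith
            exact mul_le_mul_of_nonneg_right (by exact_mod_cast hScard) h1
    have hkpos : (0:ℝ) < Ec.card := by exact_mod_cast hk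
    nlinarith
end

section
/- Let T be a finite tree with n vertices rooted at r, where n ≥ 2. Then there exists an assignment of nonnegative reals f_{e,u}, f_{e,v} to the endpoints of every edge e = (u,v) of T such that f_{e,u} + f_{e,v} = 1 for every edge, and for every vertex v the sum of f_{e,v} over all edges incident to v is at most 1 - 1/n. -/
open Finset SimpleGraph
set_option linter.unusedSectionVars false

section Aux
variable {V : Type} [Fintype V] [DecidableEq V] {T : SimpleGraph V}

private lemma tree_path_len (hT : T.IsTree) {u v : V} (p : T.Walk u v) (hp : p.IsPath) :
    p.length = T.dist u v := by
  obtain ⟨q, hq⟩ := hT.isConnected.exists_walk_length_eq_dist u v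
  have huniq := hT.existsUnique_path u v
  have hpq : p = q.bypass := huniq.unique hp q.bypass_isPath
  have h1 : p.length ≤ T.dist u v := by
    rw [hpq, ← hq]; exact q.length_bypass_le
  exact le_antisymm h1 (SimpleGraph.dist_le p)

private lemma tree_dist_split (hT : T.IsTree) {u v w : V} (p : T.Walk v w) (hp : p.IsPath)
    (hu : u ∈ p.support) : T.dist v u + T.dist u w = T.dist v w := by
  have hs := p.take_spec hu
  have h1 : (p.takeUntil u hu).IsPath := hp.takeUntil hu
  have h2 : (p.dropUntil u hu).IsPath := hp.dropUntil hu
  have := congrArg SimpleGraph.Walk.length hs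
  rw [SimpleGraph.Walk.length_append] at this
  rw [← tree_path_len hT _ hp, ← tree_path_len hT _ h1, ← tree_path_len hT _ h2]
  exact this

/-- In a tree, adjacent vertices have different distances to any vertex. -/
private lemma tree_dist_ne (hT : T.IsTree) {u v : V} (h : T.Adj u v) (w : V) :
    T.dist w u ≠ T.dist w v := by
  intro heq
  obtain ⟨p, hplen⟩ := hT.isConnected.exists_walk_length_eq_dist w v
  have hp : p.bypass.IsPath := p.bypass_isPath
  set q := p.bypass with hq
  have hqlen : q.length = T.dist w v := tree_path_len hT q hp
  by_cases hmem : u ∈ q.support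
  · have := tree_dist_split hT q hp hmem
    have hadj : T.dist u v = 1 := SimpleGraph.dist_eq_one_iff_adj.mpr h
    omega
  · have hpath : (q.concat h.symm).IsPath := by
      rw [← SimpleGraph.Walk.isPath_reverse_iff, SimpleGraph.Walk.reverse_concat]
      rw [SimpleGraph.Walk.cons_isPath_iff]
      refine ⟨(SimpleGraph.Walk.isPath_reverse_iff q).mpr hp, ?_⟩
      rwa [SimpleGraph.Walk.support_reverse, List.mem_reverse]
    have := tree_path_len hT _ hpath
    rw [SimpleGraph.Walk.length_concat, hqlen] at this
    omega

/-- Existence: every `w ≠ v` is strictly closer to some neighbor of `v`. -/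
private lemma tree_exists_closer (hT : T.IsTree) {v w : V} (hwv : w ≠ v) :
    ∃ u, T.Adj v u ∧ T.dist w u < T.dist w v := by
  obtain ⟨p, hplen⟩ := hT.isConnected.exists_walk_length_eq_dist v w
  have hp : p.bypass.IsPath := p.bypass_isPath
  have hqlen : p.bypass.length = T.dist v w := tree_path_len hT p.bypass hp
  obtain ⟨u, hadj, q', heq⟩ := SimpleGraph.Walk.exists_eq_cons_of_ne (Ne.symm hwv) p.bypass
  rw [heq] at hp hqlen
  refine ⟨u, hadj, ?_⟩
  have hq' : q'.IsPath := hp.of_cons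
  have h1 : q'.length = T.dist u w := tree_path_len hT q' hq'
  have h2 : q'.length + 1 = T.dist v w := by
    simpa [SimpleGraph.Walk.length_cons] using hqlen
  have c1 : T.dist w u = T.dist u w := SimpleGraph.dist_comm
  have c2 : T.dist w v = T.dist v w := SimpleGraph.dist_comm
  omega

/-- Uniqueness of the closer neighbor. -/
private lemma tree_closer_unique (hT : T.IsTree) {v u u' w : V}
    (h : T.Adj v u) (h' : T.Adj v u')
    (hu : T.dist w u < T.dist w v) (hu' : T.dist w u' < T.dist w v) : u = u' := by
  have key : ∀ (x : V), T.Adj v x → T.dist w x < T.dist w v →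
      ∃ (q : T.Walk w x) (hq : q.IsPath) (hx : v ∉ q.support), True := by
    intro x hx hlt
    obtain ⟨p, hplen⟩ := hT.isConnected.exists_walk_length_eq_dist w x
    refine ⟨p.bypass, p.bypass_isPath, ?_, trivial⟩
    intro hv
    have := tree_dist_split hT p.bypass p.bypass_isPath hv
    have hlen : p.bypass.length = T.dist w x := tree_path_len hT _ p.bypass_isPath
    have hadj : T.dist v x = 1 := SimpleGraph.dist_eq_one_iff_adj.mpr hx
    omega
  obtain ⟨q, hq, hv, -⟩ := key u h hu
  obtain ⟨q', hq', hv', -⟩ := key u' h' hu'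
  have hpath : (q.concat h.symm).IsPath := by
    rw [← SimpleGraph.Walk.isPath_reverse_iff, SimpleGraph.Walk.reverse_concat,
      SimpleGraph.Walk.cons_isPath_iff]
    exact ⟨(SimpleGraph.Walk.isPath_reverse_iff q).mpr hq, by
      rwa [SimpleGraph.Walk.support_reverse, List.mem_reverse]⟩
  have hpath' : (q'.concat h'.symm).IsPath := by
    rw [← SimpleGraph.Walk.isPath_reverse_iff, SimpleGraph.Walk.reverse_concat,
      SimpleGraph.Walk.cons_isPath_iff]
    exact ⟨(SimpleGraph.Walk.isPath_reverse_iff q').mpr hq', by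
      rwa [SimpleGraph.Walk.support_reverse, List.mem_reverse]⟩
  have heq : q.concat h.symm = q'.concat h'.symm :=
    (hT.existsUnique_path w v).unique hpath hpath'
  obtain ⟨huu', -⟩ := SimpleGraph.Walk.concat_inj heq
  exact huu'

end Aux


/-- Every finite tree `T` on `n ≥ 2` vertices (rooted at `r`) admits an
assignment of nonnegative flows to the endpoints of its edges such that the two flows
of every edge sum to `1` and the total flow assigned to every vertex from its incident
edges is at most `1 - 1/n`. -/
theorem stmt_4 {V : Type} [Fintype V] [DecidableEq V] (T : SimpleGraph V)
    [DecidableRel T.Adj] (hT : T.IsTree) (r : V)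
    (n : ℕ) (hn : n = Fintype.card V) (hn2 : 2 ≤ n) :
    ∃ f : Sym2 V → V → ℝ,
      (∀ e ∈ T.edgeSet, ∀ v ∈ e, 0 ≤ f e v) ∧
      (∀ u v : V, T.Adj u v → f s(u, v) u + f s(u, v) v = 1) ∧
      (∀ v : V, ∑ e ∈ T.incidenceFinset v, f e v ≤ 1 - 1 / (n : ℝ)) := by
  classical
  have hnpos : (0:ℝ) < (n:ℝ) := by
    have : (0:ℕ) < n := by omega
    exact_mod_cast this
  set g : V → V → ℕ := fun a b => (univ.filter (fun w => T.dist w a < T.dist w b)).card with hg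
  -- evaluation lemma for the flow function
  have feval : ∀ (u v : V), u ≠ v →
      (if h : v ∈ (s(u,v) : Sym2 V) then ((g (Sym2.Mem.other h) v : ℝ) / n) else 0)
        = (g u v : ℝ) / n := by
    intro u v huv
    have hmem : v ∈ (s(u,v) : Sym2 V) := Sym2.mem_mk_right u v
    rw [dif_pos hmem]
    have hsp : s(v, Sym2.Mem.other hmem) = s(u, v) := Sym2.other_spec hmem
    have : Sym2.Mem.other hmem = u := by
      rcases Sym2.eq_iff.mp hsp with ⟨h1, h2⟩ | ⟨h1, h2⟩
      · exact absurd h1.symm huv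
      · exact h2
    rw [this]
  refine ⟨fun e x => if h : x ∈ e then (g (Sym2.Mem.other h) x : ℝ) / n else 0, ?_, ?_, ?_⟩
  · intro e _ v _
    dsimp only
    split
    · positivity
    · positivity
  · -- edge sums
    intro u v huv
    dsimp only
    have h1 : (if h : u ∈ (s(u,v) : Sym2 V) then ((g (Sym2.Mem.other h) u : ℝ) / n) else 0)
        = (g v u : ℝ) / n := by
      rw [Sym2.eq_swap]; exact feval v u huv.ne'
    rw [h1, feval u v huv.ne]
    have hsum : g v u + g u v = n := by
      have htot := Finset.card_filter_add_card_filter_not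
        (s := (univ : Finset V)) (p := fun w => T.dist w u < T.dist w v)
      have hswap : (univ.filter (fun w => ¬ T.dist w u < T.dist w v))
          = univ.filter (fun w => T.dist w v < T.dist w u) := by
        apply Finset.filter_congr
        intro w _
        have hne := tree_dist_ne hT huv w
        constructor <;> intro <;> omega
      rw [hswap] at htot
      have hcu : (univ : Finset V).card = n := by rw [hn, Fintype.card]
      simp only [hg]
      omega
    have : ((g v u : ℝ) + (g u v : ℝ)) = (n : ℝ) := by exact_mod_cast congrArg (Nat.cast : ℕ → ℝ) hsum
    field_simp
    linarith
  · -- vertex sums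
    intro v
    have himg : T.incidenceFinset v = (T.neighborFinset v).image (fun u => s(u, v)) := by
      ext e
      refine e.ind (fun a b => ?_)
      simp only [mem_incidenceFinset, Finset.mem_image, mem_neighborFinset]
      constructor
      · rintro ⟨hab, hv⟩
        rw [Sym2.mem_iff] at hv
        rcases hv with rfl | rfl
        · exact ⟨b, hab, Sym2.eq_swap⟩
        · exact ⟨a, hab.symm, rfl⟩
      · rintro ⟨u, hadj, heq⟩
        rw [← heq]
        exact ⟨hadj.symm, Sym2.mem_mk_right u v⟩
    have hinj : ∀ u ∈ T.neighborFinset v, ∀ u' ∈ T.neighborFinset v,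
        s(u, v) = s(u', v) → u = u' := by
      intro u hu u' hu' heq
      rw [mem_neighborFinset] at hu hu'
      rcases Sym2.eq_iff.mp heq with ⟨h, -⟩ | ⟨h1, h2⟩
      · exact h
      · exact absurd h1.symm hu.ne
    dsimp only
    rw [himg, Finset.sum_image hinj]
    have hterm : ∀ u ∈ T.neighborFinset v,
        (if h : v ∈ (s(u,v) : Sym2 V) then ((g (Sym2.Mem.other h) v : ℝ) / n) else 0)
          = (g u v : ℝ) / n := by
      intro u hu
      exact feval u v (mem_neighborFinset T v u |>.mp hu).ne'
    rw [Finset.sum_congr rfl hterm]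
    -- the counting argument
    have hcount : ∑ u ∈ T.neighborFinset v, g u v = n - 1 := by
      have hdisj : ∀ u ∈ T.neighborFinset v, ∀ u' ∈ T.neighborFinset v, u ≠ u' →
          Disjoint (univ.filter (fun w => T.dist w u < T.dist w v))
            (univ.filter (fun w => T.dist w u' < T.dist w v)) := by
        intro u hu u' hu' hne
        rw [Finset.disjoint_left]
        intro w hw hw'
        rw [Finset.mem_filter] at hw hw'
        exact hne (tree_closer_unique hT ((mem_neighborFinset T v u).mp hu)
          ((mem_neighborFinset T v u').mp hu') hw.2 hw'.2)
      have hbi : (T.neighborFinset v).biUnion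
          (fun u => univ.filter (fun w => T.dist w u < T.dist w v)) = univ.erase v := by
        ext w
        simp only [Finset.mem_biUnion, Finset.mem_filter, Finset.mem_erase, Finset.mem_univ,
          mem_neighborFinset, true_and, and_true]
        constructor
        · rintro ⟨u, hadj, hlt⟩
          intro hwv
          subst hwv
          have : T.dist w w = 0 := SimpleGraph.dist_self
          omega
        · intro hwv
          obtain ⟨u, hadj, hlt⟩ := tree_exists_closer hT hwv
          exact ⟨u, hadj, hlt⟩
      have := Finset.card_biUnion hdisj
      rw [hbi] at this
      rw [hg]
      rw [← this]
      have : (univ.erase v).card = n - 1 := by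
        rw [Finset.card_erase_of_mem (Finset.mem_univ v), hn, Fintype.card]
      omega
    rw [← Finset.sum_div, ← Nat.cast_sum, hcount]
    have h1 : ((n - 1 : ℕ) : ℝ) = (n : ℝ) - 1 := by
      have : (1:ℕ) ≤ n := by omega
      push_cast [Nat.cast_sub this]
      ring
    rw [h1]
    rw [sub_div, div_self (ne_of_gt hnpos)]
end

section
/- Let T_1, ..., T_k be subgraphs of a finite graph G satisfying: (a) for each i, |V(T_i)| = 1 + |E(T_i)| and r_i ∈ V(T_i); (b) each T_i admits a flow assignment f with f_{e,u} + f_{e,v} = 1 for every e = (u,v) ∈ E(T_i) and Σ_{e ∈ E(T_i), e ∼ v} f_{e,v} ≤ 1 - 1/|V(G)| for every v ∈ V(T_i); and (c) every vertex of G lies in some T_i. Then {T_1, ..., T_k} is a feasible MMRTC solution: each T_i is a tree containing r_i, and the trees jointly cover V(G). -/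
/-!
A cycle of length `n` in `T i` would carry flow exactly `1` on each of its `n` edges, hence `n`
in total, while each of its `n` vertices absorbs at most `1 - 1/|V| < 1`; so every `T i` is
acyclic. An acyclic graph with one more vertex than edges is a tree: it extends to a spanning
tree of the complete graph on its vertices, which has the same number of edges and hence
coincides with it.
-/

open SimpleGraph Finset

namespace SimpleGraph

variable {V : Type*} {H : SimpleGraph V}

lemma Walk.IsCycle.mem_tail_support {v x : V} {c : H.Walk v v} (hc : c.IsCycle)
    (hx : x ∈ c.support) : x ∈ c.support.tail := by
  rw [← Walk.cons_tail_support] at hx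
  rcases List.mem_cons.mp hx with rfl | hx
  · exact Walk.end_mem_tail_support hc.not_nil
  · exact hx

theorem isAcyclic_of_flow [DecidableEq V] [H.LocallyFinite] (f : Sym2 V → V → ℝ)
    (hnonneg : ∀ e ∈ H.edgeSet, ∀ v ∈ e, 0 ≤ f e v)
    (hedge : ∀ ⦃u v⦄, H.Adj u v → f s(u, v) u + f s(u, v) v = 1)
    (hload : ∀ v, ∑ e ∈ H.incidenceFinset v, f e v < 1) : H.IsAcyclic := by
  intro v c hc
  set E := c.edges.toFinset
  set S := c.support.tail.toFinset
  have hE : #E = c.length := by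
    rw [List.toFinset_card_of_nodup hc.edges_nodup, Walk.length_edges]
  have hS : #S = c.length := by
    rw [List.toFinset_card_of_nodup hc.support_nodup, List.length_tail, Walk.length_support]
    rfl
  have hEadj : ∀ e ∈ E, e ∈ H.edgeSet := fun e he =>
    c.edges_subset_edgeSet (List.mem_toFinset.mp he)
  have hES : ∀ e ∈ E, ∀ u ∈ e, u ∈ S := fun e he u hu =>
    List.mem_toFinset.mpr <| hc.mem_tail_support <|
      Walk.mem_support_of_mem_edges (List.mem_toFinset.mp he) hu
  have hedgeSum : ∀ e ∈ E, ∑ u ∈ S with u ∈ e, f e u = 1 := by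
    intro e he
    induction e with
    | h a b =>
      have hab : H.Adj a b := hEadj _ he
      have : {u ∈ S | u ∈ s(a, b)} = {a, b} := by
        ext u
        simp only [mem_filter, mem_insert, mem_singleton, Sym2.mem_iff]
        exact ⟨And.right, fun hu => ⟨hES _ he u (Sym2.mem_iff.mpr hu), hu⟩⟩
      rw [this, sum_pair hab.ne, hedge hab]
  have hvertSum : ∀ u ∈ S, ∑ e ∈ E with u ∈ e, f e u < 1 := by
    intro u _
    refine lt_of_le_of_lt (sum_le_sum_of_subset_of_nonneg ?_ ?_) (hload u)
    · intro e he
      rw [mem_filter] at he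
      exact (H.mem_incidenceFinset u e).mpr ⟨hEadj e he.1, he.2⟩
    · intro e he _
      obtain ⟨he, hue⟩ := (H.mem_incidenceFinset u e).mp he
      exact hnonneg e he u hue
  have hSne : S.Nonempty := card_pos.mp (hS ▸ hc.three_le_length.trans_lt' (by norm_num))
  refine lt_irrefl (c.length : ℝ) ?_
  calc
    (c.length : ℝ) = ∑ e ∈ E, ∑ u ∈ S with u ∈ e, f e u := by
      rw [sum_congr rfl hedgeSum, sum_const, hE, nsmul_one]
    _ = ∑ u ∈ S, ∑ e ∈ E with u ∈ e, f e u := by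
      simp only [sum_filter]
      exact sum_comm
    _ < ∑ u ∈ S, 1 := sum_lt_sum_of_nonempty hSne hvertSum
    _ = c.length := by rw [sum_const, hS, nsmul_one]

theorem IsAcyclic.isTree_of_card_edgeSet [Finite V] [Nonempty V] (h : H.IsAcyclic)
    (hcard : Nat.card H.edgeSet + 1 = Nat.card V) : H.IsTree := by
  obtain ⟨F, hHF, -, hF⟩ :=
    (connected_top (V := V)).exists_isTree_le_of_le_of_isAcyclic le_top h
  have hFcard := (isTree_iff_connected_and_card.mp hF).2
  have : H.edgeSet = F.edgeSet :=
    Set.eq_of_subset_of_ncard_le (edgeSet_mono hHF) (by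
      rw [← Nat.card_coe_set_eq, ← Nat.card_coe_set_eq]; omega) (Set.toFinite _)
  rwa [edgeSet_inj.mp this]

lemma Subgraph.natCard_coe_edgeSet {G : SimpleGraph V} (T : G.Subgraph) :
    Nat.card T.coe.edgeSet = T.edgeSet.ncard := by
  rw [← T.image_coe_edgeSet_coe,
    Set.ncard_image_of_injective _ (Sym2.map.injective Subtype.val_injective), Nat.card_coe_set_eq]

end SimpleGraph

theorem stmt_11_general {V : Type} [Fintype V] (G : SimpleGraph V)
    (k : ℕ) (r : Fin k → V) (T : Fin k → G.Subgraph)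
    (f : Fin k → Sym2 V → V → ℝ)
    (hcount : ∀ i, Set.ncard (T i).verts = 1 + Set.ncard (T i).edgeSet)
    (hroot : ∀ i, r i ∈ (T i).verts)
    (hnonneg : ∀ i, ∀ e ∈ (T i).edgeSet, ∀ v ∈ e, 0 ≤ f i e v)
    (hedge : ∀ i, ∀ u v : V, (T i).Adj u v → f i s(u, v) u + f i s(u, v) v = 1)
    (hvertex : ∀ i, ∀ v ∈ (T i).verts,
      ∑ e ∈ (Set.toFinite {e ∈ (T i).edgeSet | v ∈ e}).toFinset, f i e v
        ≤ 1 - 1 / (Fintype.card V : ℝ))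
    (hcover : ∀ v : V, ∃ i, v ∈ (T i).verts) :
    (∀ i, (T i).coe.IsTree) ∧ (∀ i, r i ∈ (T i).verts) ∧
    (∀ v : V, ∃ i, v ∈ (T i).verts) := by
  classical
  refine ⟨fun i => ?_, hroot, hcover⟩
  have : Nonempty (T i).verts := ⟨⟨r i, hroot i⟩⟩
  have hV : 0 < 1 / (Fintype.card V : ℝ) := by
    have : 0 < Fintype.card V := Fintype.card_pos_iff.mpr ⟨r i⟩
    positivity
  have hload : ∀ v, ∑ e ∈ (T i).spanningCoe.incidenceFinset v, f i e v < 1 := by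
    intro v
    by_cases hv : v ∈ (T i).verts
    · refine (le_of_eq ?_).trans_lt ((hvertex i v hv).trans_lt (sub_lt_self 1 hV))
      congr 1
      ext e
      simp [mem_incidenceFinset, incidenceSet]
    · rw [sum_eq_zero fun e he => ?_]
      · exact one_pos
      rw [mem_incidenceFinset] at he
      exact absurd (Subgraph.mem_verts_of_mem_edge he.1 he.2) hv
  have hac : (T i).coe.IsAcyclic :=
    (isAcyclic_of_flow (f i) (hnonneg i) (hedge i) hload).comap ⟨Subtype.val, id⟩
      Subtype.val_injective
  refine hac.isTree_of_card_edgeSet ?_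
  rw [Subgraph.natCard_coe_edgeSet, Nat.card_coe_set_eq, hcount i, add_comm]

/-- If subgraphs `T 1, ..., T k` of a finite graph `G` satisfy
(a) `|V(T i)| = 1 + |E(T i)|` and `r i ∈ V(T i)`,
(b) each `T i` admits a nonnegative flow assignment whose two flows sum to `1` on
every edge of `T i` and whose total incident flow at each vertex of `T i` is at most
`1 - 1/|V(G)|`, and
(c) every vertex of `G` lies in some `T i`,
then each `T i` is a tree containing its root and the trees jointly cover `V(G)`. -/
theorem stmt_11 {V : Type} [Fintype V] [DecidableEq V] (G : SimpleGraph V)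
    (k : ℕ) (r : Fin k → V) (T : Fin k → G.Subgraph)
    (f : Fin k → Sym2 V → V → ℝ)
    (hcount : ∀ i, Set.ncard (T i).verts = 1 + Set.ncard (T i).edgeSet)
    (hroot : ∀ i, r i ∈ (T i).verts)
    (hnonneg : ∀ i, ∀ e ∈ (T i).edgeSet, ∀ v ∈ e, 0 ≤ f i e v)
    (hedge : ∀ i, ∀ u v : V, (T i).Adj u v → f i s(u, v) u + f i s(u, v) v = 1)
    (hvertex : ∀ i, ∀ v ∈ (T i).verts,
      ∑ e ∈ (Set.toFinite {e ∈ (T i).edgeSet | v ∈ e}).toFinset, f i e v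
        ≤ 1 - 1 / (Fintype.card V : ℝ))
    (hcover : ∀ v : V, ∃ i, v ∈ (T i).verts) :
    (∀ i, (T i).coe.IsTree) ∧ (∀ i, r i ∈ (T i).verts) ∧
    (∀ v : V, ∃ i, v ∈ (T i).verts) :=
  stmt_11_general G k r T f hcount hroot hnonneg hedge hvertex hcover
end

section
/- Let S be a path subgraph with vertices a_1, ..., a_s and edges (a_j, a_{j+1}) for j = 1, ..., s-1 inside a graph on n vertices (s ≤ n), and let e_c = (a_1, a_s) be an additional edge closing the path into a cycle. Suppose nonnegative flow values satisfy f_{e,u} + f_{e,v} = x_e for every edge e ∈ {e_c} ∪ E(S) with x_e = 1 for e ∈ E(S) and x_{e_c} ∈ {0, 1}, and for every vertex a_j the total incident flow (over all edges of the ambient graph) is at most 1 - 1/n. Then x_{e_c} = 0. -/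
/-- key inequality of the MIP correctness proof: Let
`a 0, a 1, ..., a (s-1)` be the distinct vertices of a path `S` in a graph `G` on `n`
vertices (`3 ≤ s ≤ n`), with path edges `(a j, a (j+1))` and an additional edge
`e_c = (a 0, a (s-1))` of `G` closing the path into a cycle. If nonnegative flows
`f e v` on the edge endpoints satisfy `f e u + f e v = 1` for every path edge,
`f e_c (a 0) + f e_c (a (s-1)) = x` with `x ∈ {0, 1}`, and the total incident flow
(over all edges of `G`) at every vertex is at most `1 - 1/n`, then `x = 0`. -/
theorem stmt_12 {V : Type} [Fintype V] [DecidableEq V] (G : SimpleGraph V)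
    [DecidableRel G.Adj]
    (n : ℕ) (hn : n = Fintype.card V)
    (s : ℕ) (hs : 3 ≤ s) (hsn : s ≤ n)
    (a : ℕ → V)
    (hinj : ∀ j1 < s, ∀ j2 < s, a j1 = a j2 → j1 = j2)
    (f : Sym2 V → V → ℝ)
    (hnonneg : ∀ e : Sym2 V, ∀ v : V, 0 ≤ f e v)
    (hpath : ∀ j, j + 1 < s → G.Adj (a j) (a (j + 1)) ∧
      f s(a j, a (j + 1)) (a j) + f s(a j, a (j + 1)) (a (j + 1)) = 1)
    (hclose : G.Adj (a 0) (a (s - 1)))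
    (x : ℝ)
    (hxdef : f s(a 0, a (s - 1)) (a 0) + f s(a 0, a (s - 1)) (a (s - 1)) = x)
    (hx01 : x = 0 ∨ x = 1)
    (hvertex : ∀ v : V, ∑ e ∈ G.incidenceFinset v, f e v ≤ 1 - 1 / (n : ℝ)) :
    x = 0 := by
  rcases hx01 with h | h
  · exact h
  · exfalso
    obtain ⟨m, rfl⟩ : ∃ m, s = m + 3 := ⟨s - 3, by omega⟩
    have hsm : m + 3 - 1 = m + 2 := by omega
    rw [hsm] at hclose hxdef
    set E : ℕ → Sym2 V := fun j => s(a j, a (j+1)) with hE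
    set ec : Sym2 V := s(a 0, a (m+2)) with hec
    set l : ℕ → Sym2 V := fun j => if j = 0 then ec else E (j-1) with hl
    set r : ℕ → Sym2 V := fun j => if j = m+2 then ec else E j with hr
    have hl0 : l 0 = ec := if_pos rfl
    have hlj : ∀ j, j ≠ 0 → l j = E (j-1) := fun j h => if_neg h
    have hr2 : r (m+2) = ec := if_pos rfl
    have hrj : ∀ j, j ≠ m+2 → r j = E j := fun j h => if_neg h
    have hEeq : ∀ j, E j = s(a j, a (j+1)) := fun j => rfl
    -- per-vertex bound
    have key : ∀ j < m + 3,
        f (l j) (a j) + f (r j) (a j) ≤ 1 - 1 / (n : ℝ) := by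
      intro j hj
      have hne : l j ≠ r j := by
        intro hlr
        by_cases h0 : j = 0
        · subst h0
          rw [hl0, hrj 0 (by omega), hec, hEeq] at hlr
          rw [Sym2.eq_iff] at hlr
          rcases hlr with ⟨_, h'⟩ | ⟨h', _⟩
          · have := hinj (m+2) (by omega) 1 (by omega) h'; omega
          · have := hinj 0 (by omega) 1 (by omega) h'; omega
        · by_cases h2 : j = m + 2
          · subst h2
            rw [hr2, hlj (m+2) (by omega), hec, hEeq] at hlr
            have e1 : m + 2 - 1 = m + 1 := by omega
            rw [e1, show m + 1 + 1 = m + 2 from rfl, Sym2.eq_iff] at hlr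
            rcases hlr with ⟨h', _⟩ | ⟨h', _⟩
            · have := hinj (m+1) (by omega) 0 (by omega) h'; omega
            · have := hinj (m+1) (by omega) (m+2) (by omega) h'; omega
          · rw [hlj j h0, hrj j h2, hEeq, hEeq,
              show j - 1 + 1 = j from by omega, Sym2.eq_iff] at hlr
            rcases hlr with ⟨h', _⟩ | ⟨h', _⟩
            · have := hinj (j-1) (by omega) j (by omega) h'; omega
            · have := hinj (j-1) (by omega) (j+1) (by omega) h'; omega
      have hlm : l j ∈ G.incidenceFinset (a j) := by
        rw [SimpleGraph.mem_incidenceFinset]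
        by_cases h0 : j = 0
        · subst h0; rw [hl0, hec]
          exact G.mk'_mem_incidenceSet_left_iff.2 hclose
        · rw [hlj j h0, hEeq, show j - 1 + 1 = j from by omega]
          have had := (hpath (j-1) (by omega)).1
          rw [show j - 1 + 1 = j from by omega] at had
          exact G.mk'_mem_incidenceSet_right_iff.2 had
      have hrm : r j ∈ G.incidenceFinset (a j) := by
        rw [SimpleGraph.mem_incidenceFinset]
        by_cases h2 : j = m + 2
        · subst h2; rw [hr2, hec]
          exact G.mk'_mem_incidenceSet_right_iff.2 hclose
        · rw [hrj j h2, hEeq]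
          exact G.mk'_mem_incidenceSet_left_iff.2 (hpath j (by omega)).1
      have hp : ∑ e ∈ ({l j, r j} : Finset (Sym2 V)), f e (a j)
          = f (l j) (a j) + f (r j) (a j) := Finset.sum_pair hne
      calc f (l j) (a j) + f (r j) (a j)
          = ∑ e ∈ ({l j, r j} : Finset (Sym2 V)), f e (a j) := hp.symm
        _ ≤ ∑ e ∈ G.incidenceFinset (a j), f e (a j) := by
            apply Finset.sum_le_sum_of_subset_of_nonneg
            · intro e he
              rcases Finset.mem_insert.1 he with rfl | he
              · exact hlm
              · rw [Finset.mem_singleton.1 he]; exact hrm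
            · intro e _ _; exact hnonneg e (a j)
        _ ≤ 1 - 1 / (n : ℝ) := hvertex (a j)
    -- sum over all vertices
    have hsum : ∑ j ∈ Finset.range (m+3), (f (l j) (a j) + f (r j) (a j))
        = (m + 2 : ℝ) + x := by
      rw [Finset.sum_add_distrib]
      have hL : ∑ j ∈ Finset.range (m+3), f (l j) (a j)
          = f ec (a 0) + ∑ j ∈ Finset.range (m+2), f (E j) (a (j+1)) := by
        rw [Finset.sum_range_succ' (fun j => f (l j) (a j)), hl0, add_comm]
        refine congrArg _ (Finset.sum_congr rfl fun j _ => ?_)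
        rw [hlj (j+1) (Nat.succ_ne_zero j), Nat.add_sub_cancel]
      have hR : ∑ j ∈ Finset.range (m+3), f (r j) (a j)
          = (∑ j ∈ Finset.range (m+2), f (E j) (a j)) + f ec (a (m+2)) := by
        rw [Finset.sum_range_succ (fun j => f (r j) (a j)), hr2]
        congr 1
        apply Finset.sum_congr rfl
        intro j hj
        rw [hrj j (by have := Finset.mem_range.1 hj; omega)]
      rw [hL, hR]
      have hx : f ec (a 0) + f ec (a (m+2)) = x := hxdef
      have hpsum : ∑ j ∈ Finset.range (m+2),
          (f (E j) (a j) + f (E j) (a (j+1))) = (m+2 : ℝ) := by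
        rw [Finset.sum_congr rfl (fun j hj => (hpath j (by
          have := Finset.mem_range.1 hj; omega)).2)]
        simp
      calc f ec (a 0) + ∑ j ∈ Finset.range (m+2), f (E j) (a (j+1))
            + ((∑ j ∈ Finset.range (m+2), f (E j) (a j)) + f ec (a (m+2)))
          = (∑ j ∈ Finset.range (m+2), (f (E j) (a j) + f (E j) (a (j+1))))
            + (f ec (a 0) + f ec (a (m+2))) := by
            rw [Finset.sum_add_distrib]; ring
        _ = (m + 2 : ℝ) + x := by rw [hx, hpsum]
    have hbound : ∑ j ∈ Finset.range (m+3), (f (l j) (a j) + f (r j) (a j))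
        ≤ (m + 3 : ℝ) * (1 - 1 / (n : ℝ)) := by
      calc ∑ j ∈ Finset.range (m+3), (f (l j) (a j) + f (r j) (a j))
          ≤ ∑ _j ∈ Finset.range (m+3), (1 - 1 / (n : ℝ)) :=
            Finset.sum_le_sum (fun j hj => key j (Finset.mem_range.1 hj))
        _ = (m + 3 : ℝ) * (1 - 1 / (n : ℝ)) := by
            rw [Finset.sum_const, Finset.card_range]; ring
    rw [hsum, h] at hbound
    have hn0 : (0 : ℝ) < (n : ℝ) := by
      have : 3 ≤ n := by omega
      positivity
    have hexp : ((m : ℝ) + 3) * (1 - 1 / (n : ℝ))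
        = ((m : ℝ) + 3) - ((m : ℝ) + 3) / (n : ℝ) := by ring
    have hpos : (0 : ℝ) < ((m : ℝ) + 3) / (n : ℝ) := by positivity
    rw [hexp] at hbound
    linarith
end
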